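/- arXiv:2207.02414 — 4 statements merged into one kernel-verified Lean document; each statement's English description precedes it below -/
import Mathlib

section
/- For any complex number z with Re z > α and any real α > -1, the integral ∫₀^∞ e^{-kz}(e^k - 1)^α dk equals Γ(z - α)Γ(1 + α)/Γ(z + 1). -/
open MeasureTheory Real Set

/-! The substitution `t = e^{-k}` maps `(0, ∞)` onto `(0, 1)`, and since
`e^{-kz} (e^k - 1)^α = e^{-k(z - α)} (1 - e^{-k})^α` it turns the integral into Euler's beta
integral `B(z - α, 1 + α) = Γ(z - α) Γ(1 + α) / Γ(z + 1)`. -/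

lemma image_exp_neg_Ioi_zero : (fun k : ℝ => exp (-k)) '' Ioi 0 = Ioo 0 1 := by
  rw [← exp_zero, ← image_exp_Iio, ← neg_zero, ← image_neg_Ioi, image_image, neg_zero]

lemma integral_Ioo_zero_one_eq_integral_exp_neg_Ioi {E : Type*} [NormedAddCommGroup E]
    [NormedSpace ℝ E] (f : ℝ → E) :
    ∫ t in Ioo 0 1, f t = ∫ k in Ioi 0, exp (-k) • f (exp (-k)) := by
  rw [← image_exp_neg_Ioi_zero, integral_image_eq_integral_abs_deriv_smul measurableSet_Ioi
    (fun k _ => ((hasDerivAt_neg k).exp).hasDerivWithinAt)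
    (fun a _ b _ h => neg_injective (exp_injective h))]
  simp [abs_of_pos (exp_pos _)]

lemma Complex.ofReal_exp_cpow (x : ℝ) (w : ℂ) : (Real.exp x : ℂ) ^ w = exp (x * w) := by
  rw [Complex.cpow_def_of_ne_zero (Complex.ofReal_ne_zero.mpr (exp_pos x).ne'),
    ← Complex.ofReal_log (exp_pos x).le, Real.log_exp]

lemma Complex.betaIntegral_eq_integral_Ioi (u v : ℂ) :
    betaIntegral u v = ∫ k in Ioi (0:ℝ), exp (-k * u) * (1 - (Real.exp (-k) : ℂ)) ^ (v - 1) := by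
  rw [betaIntegral, intervalIntegral.integral_of_le zero_le_one, integral_Ioc_eq_integral_Ioo,
    integral_Ioo_zero_one_eq_integral_exp_neg_Ioi]
  refine setIntegral_congr_fun measurableSet_Ioi fun k _ => ?_
  rw [ofReal_exp_cpow, real_smul, ofReal_exp, ← mul_assoc, ← exp_add]
  push_cast
  ring_nf

lemma one_sub_exp_neg_nonneg {k : ℝ} (hk : 0 ≤ k) : 0 ≤ 1 - exp (-k) :=
  sub_nonneg.mpr (exp_le_one_iff.mpr (neg_nonpos.mpr hk))

lemma rpow_exp_sub_one {k : ℝ} (hk : 0 ≤ k) (a : ℝ) :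
    (exp k - 1) ^ a = exp (k * a) * (1 - exp (-k)) ^ a := by
  have h : exp k - 1 = exp k * (1 - exp (-k)) := by
    rw [mul_sub, mul_one, ← exp_add, add_neg_cancel, exp_zero]
  rw [h, mul_rpow (exp_pos k).le (one_sub_exp_neg_nonneg hk), exp_mul]

theorem beta_integral_gamma (α : ℝ) (hα : -1 < α) (z : ℂ) (hz : α < z.re) :
    ∫ k in Ioi (0:ℝ), Complex.exp (-k * z) * ((Real.exp k - 1) ^ α : ℝ)
      = Complex.Gamma (z - α) * Complex.Gamma (1 + α) / Complex.Gamma (z + 1) := by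
  have hzα : 0 < (z - α).re := by simpa using hz
  have h1α : 0 < (1 + α : ℂ).re := by
    simp only [Complex.add_re, Complex.one_re, Complex.ofReal_re]; linarith
  have hΓ : Complex.Gamma (z + 1) ≠ 0 := Complex.Gamma_ne_zero_of_re_pos (by
    simp only [Complex.add_re, Complex.one_re]; linarith)
  rw [Complex.Gamma_mul_Gamma_eq_betaIntegral hzα h1α, sub_add_add_cancel,
    mul_div_cancel_left₀ _ hΓ, Complex.betaIntegral_eq_integral_Ioi, add_sub_cancel_left]
  refine setIntegral_congr_fun measurableSet_Ioi fun k (hk : 0 < k) => ?_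
  rw [rpow_exp_sub_one hk.le, Complex.ofReal_mul, Complex.ofReal_exp, ← mul_assoc,
    ← Complex.exp_add, Complex.ofReal_cpow (one_sub_exp_neg_nonneg hk.le)]
  push_cast
  ring_nf
end

section
/- For every complex z with Re z > -1/4, one has |z + 1/2|^{-1/2} ≤ |Γ(z + 1/2)/Γ(z + 1)| ≤ |z + 1|^{1/2}/|z + 1/2|. -/
open Complex

/-! For `Re s ≥ 1/4`, Rademacher's inequality `‖Γ(s + 1/2)‖² ≤ ‖s‖ ‖Γ(s)‖²` at `s = z + 1/2` gives
the lower bound, and at `s = z + 1` (with `Γ(z + 3/2) = (z + 1/2) Γ(z + 1/2)`) the upper one.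

To prove it, pass to the limit in Gauss's products `GammaSeq`. The ratio
`‖GammaSeq (s + 1/2) n‖² / ‖GammaSeq s n‖² = n ∏_{j ≤ n} ‖s + j‖² / ‖s + j + 1/2‖²` regroups as
`‖s‖ · n ‖s + n‖ / ‖s + n + 1/2‖² · ∏_{j < n} ‖s + j‖ ‖s + j + 1‖ / ‖s + j + 1/2‖²`. For real `s`
each factor of the last product is at most `1` by AM–GM; in general its excess is controlled by an
explicit correction `c = rademacherCorrection`, the factor at `j` being at most
`exp (c (s + j) - c (s + j + 1))`. The product telescopes to `exp (c s - c (s + n))`, and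
`c (s + n) → 0`, `c s ≤ 0`. -/

open Filter Finset Topology

theorem Finset.prod_range_succ_sq {M : Type*} [CommMonoid M] (f : ℕ → M) (n : ℕ) :
    (∏ j ∈ range (n + 1), f j) ^ 2 = f 0 * f n * ∏ j ∈ range n, (f j * f (j + 1)) := by
  rw [sq]
  nth_rewrite 1 [prod_range_succ]
  rw [prod_range_succ', prod_mul_distrib]
  ac_rfl

lemma tendsto_norm_add_natCast_div (a : ℂ) :
    Tendsto (fun n : ℕ => ‖a + n‖ / n) atTop (𝓝 1) := by
  have h : Tendsto (fun n : ℕ => ‖a / n + 1‖) atTop (𝓝 1) := by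
    simpa using ((tendsto_const_div_atTop_nhds_zero_nat a).add_const 1).norm
  refine h.congr' ((eventually_ne_atTop 0).mono fun n hn => ?_)
  rw [div_add_one (Nat.cast_ne_zero.2 hn), norm_div, norm_natCast]

lemma norm_GammaSeq_mul_prod {s : ℂ} (hs : ∀ j : ℕ, s + j ≠ 0) {n : ℕ} (hn : n ≠ 0) :
    ‖GammaSeq s n‖ * ∏ j ∈ range (n + 1), ‖s + j‖ = (n : ℝ) ^ s.re * n.factorial := by
  rw [← norm_prod, ← norm_mul, GammaSeq, div_mul_cancel₀ _ (prod_ne_zero_iff.2 fun j _ => hs j),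
    norm_mul, norm_natCast_cpow_of_pos (Nat.pos_of_ne_zero hn), norm_natCast]

lemma norm_GammaSeq_add_half_sq_mul_prod {s : ℂ} (hs : 0 < s.re) {n : ℕ} (hn : n ≠ 0) :
    (‖GammaSeq (s + 1 / 2) n‖ * ∏ j ∈ range (n + 1), ‖s + 1 / 2 + j‖) ^ 2
      = n * (‖GammaSeq s n‖ * ∏ j ∈ range (n + 1), ‖s + j‖) ^ 2 := by
  have hne : ∀ {w : ℂ}, 0 < w.re → ∀ j : ℕ, w + j ≠ 0 := fun hw j =>
    ne_zero_of_re_pos <| by simp; positivity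
  rw [norm_GammaSeq_mul_prod (hne hs) hn, norm_GammaSeq_mul_prod (hne (by simp; positivity)) hn]
  have hn' : (0 : ℝ) < n := by positivity
  rw [add_re, Real.rpow_add hn']
  simp only [div_ofNat_re, one_re]
  rw [← Real.sqrt_eq_rpow]
  calc _ = (Real.sqrt n) ^ 2 * ((n : ℝ) ^ s.re * n.factorial) ^ 2 := by ring
    _ = _ := by rw [Real.sq_sqrt hn'.le]

noncomputable def rademacherCorrection (w : ℂ) : ℝ :=
  1 / (16 * normSq w + 4 * w.re) - w.re / (4 * normSq w)

lemma normSq_mul_normSq_add_one_sub_le {w : ℂ} (hw : 1 / 4 ≤ w.re) :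
    (normSq w * normSq (w + 1) - normSq (w + 1 / 2) ^ 2) / (2 * normSq (w + 1 / 2) ^ 2)
      ≤ rademacherCorrection w - rademacherCorrection (w + 1) := by
  -- In `v = Re w - 1/4 ≥ 0` and `(Im w)² ≥ 0`, the cleared difference has nonnegative coefficients.
  obtain ⟨v, hv, hwv⟩ : ∃ v : ℝ, 0 ≤ v ∧ w.re = v + 1 / 4 := ⟨w.re - 1 / 4, by linarith, by ring⟩
  simp only [rademacherCorrection, normSq_apply, add_re, add_im, one_re, one_im, hwv]
  norm_num
  rw [← sub_nonneg]
  field_simp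
  ring_nf
  positivity

lemma norm_mul_norm_add_one_le {w : ℂ} (hw : 1 / 4 ≤ w.re) :
    ‖w‖ * ‖w + 1‖
      ≤ ‖w + 1 / 2‖ ^ 2 * Real.exp (rademacherCorrection w - rademacherCorrection (w + 1)) := by
  have hm : 0 < normSq (w + 1 / 2) :=
    normSq_pos.2 <| ne_zero_of_re_pos <| by simp; linarith
  have amgm : ‖w‖ * ‖w + 1‖ ≤ normSq (w + 1 / 2) *
      (1 + (normSq w * normSq (w + 1) - normSq (w + 1 / 2) ^ 2) / (2 * normSq (w + 1 / 2) ^ 2)) := by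
    rw [← Complex.sq_norm w, ← Complex.sq_norm (w + 1)]
    generalize ‖w‖ = a, ‖w + 1‖ = b, normSq (w + 1 / 2) = M at *
    rw [show M * (1 + (a ^ 2 * b ^ 2 - M ^ 2) / (2 * M ^ 2)) = (a ^ 2 * b ^ 2 + M ^ 2) / (2 * M) by
      field_simp; ring, le_div_iff₀ (by positivity)]
    nlinarith [sq_nonneg (a * b - M)]
  calc ‖w‖ * ‖w + 1‖ ≤ _ := amgm
    _ ≤ normSq (w + 1 / 2) * (1 + (rademacherCorrection w - rademacherCorrection (w + 1))) := by
      gcongr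
      exact normSq_mul_normSq_add_one_sub_le hw
    _ ≤ _ := by
      rw [Complex.sq_norm, add_comm 1]
      gcongr
      exact Real.add_one_le_exp _

lemma prod_norm_mul_norm_add_one_le {s : ℂ} (hs : 1 / 4 ≤ s.re) (n : ℕ) :
    ∏ j ∈ range n, (‖s + j‖ * ‖s + (j + 1 : ℕ)‖)
      ≤ (∏ j ∈ range n, ‖s + 1 / 2 + j‖) ^ 2
        * Real.exp (rademacherCorrection s - rademacherCorrection (s + n)) := by
  calc ∏ j ∈ range n, (‖s + j‖ * ‖s + (j + 1 : ℕ)‖)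
      ≤ ∏ j ∈ range n, (‖s + 1 / 2 + j‖ ^ 2 * Real.exp
          (rademacherCorrection (s + j) - rademacherCorrection (s + (j + 1 : ℕ)))) := by
        refine prod_le_prod (fun _ _ => by positivity) fun j _ => ?_
        have := norm_mul_norm_add_one_le (w := s + j) (by simp; linarith)
        rw [add_right_comm s]
        simpa [add_assoc] using this
    _ = _ := by
      rw [prod_mul_distrib, ← Real.exp_sum, sum_range_sub' (fun j => rademacherCorrection (s + j)),
        prod_pow]
      simp

lemma rademacherCorrection_nonpos {w : ℂ} (hw : 1 / 4 ≤ w.re) : rademacherCorrection w ≤ 0 := by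
  have hN : w.re * w.re ≤ normSq w := re_sq_le_normSq w
  have hN0 : 0 < normSq w := by nlinarith
  rw [rademacherCorrection, sub_nonpos, div_le_div_iff₀ (by linarith) (by linarith)]
  nlinarith

lemma abs_rademacherCorrection_le {w : ℂ} (hw : 0 < w.re) :
    |rademacherCorrection w| ≤ (4 * w.re)⁻¹ := by
  have hN : w.re * w.re ≤ normSq w := re_sq_le_normSq w
  have hN0 : 0 < normSq w := by nlinarith
  have h1 : 1 / (16 * normSq w + 4 * w.re) ≤ (4 * w.re)⁻¹ := by
    rw [one_div]; gcongr; linarith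
  have h2 : w.re / (4 * normSq w) ≤ (4 * w.re)⁻¹ := by
    rw [div_le_iff₀ (by positivity), inv_mul_eq_div, le_div_iff₀ (by positivity)]; nlinarith
  rw [rademacherCorrection, abs_le]
  constructor <;> linarith [show 0 ≤ 1 / (16 * normSq w + 4 * w.re) by positivity,
    show 0 ≤ w.re / (4 * normSq w) by positivity]

lemma tendsto_rademacherCorrection_add_natCast (s : ℂ) :
    Tendsto (fun n : ℕ => rademacherCorrection (s + n)) atTop (𝓝 0) := by
  have hre : Tendsto (fun n : ℕ => (s + n).re) atTop atTop := by
    simpa using tendsto_atTop_add_const_left _ s.re tendsto_natCast_atTop_atTop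
  refine squeeze_zero_norm' ?_ (hre.const_mul_atTop four_pos).inv_tendsto_atTop
  filter_upwards [hre.eventually_gt_atTop 0] with n hn
  exact abs_rademacherCorrection_le hn

lemma norm_GammaSeq_add_half_sq_le {s : ℂ} (hs : 1 / 4 ≤ s.re) {n : ℕ} (hn : n ≠ 0) :
    ‖GammaSeq (s + 1 / 2) n‖ ^ 2 * (‖s + 1 / 2 + n‖ / n) ^ 2
      ≤ ‖s‖ * Real.exp (rademacherCorrection s - rademacherCorrection (s + n)) * (‖s + n‖ / n)
        * ‖GammaSeq s n‖ ^ 2 := by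
  set E := Real.exp (rademacherCorrection s - rademacherCorrection (s + n))
  set Y := ∏ j ∈ range n, ‖s + 1 / 2 + j‖
  have hY : 0 < Y := prod_pos fun j _ => norm_pos_iff.2 <| ne_zero_of_re_pos <| by
    simp; positivity
  have hn' : (0 : ℝ) < n := by positivity
  have hsq := norm_GammaSeq_add_half_sq_mul_prod (by linarith) hn
  rw [prod_range_succ] at hsq
  simp only [mul_pow] at hsq
  rw [Finset.prod_range_succ_sq (fun j => ‖s + j‖)] at hsq
  simp only [Nat.cast_zero, add_zero] at hsq
  have key : (‖GammaSeq (s + 1 / 2) n‖ ^ 2 * ‖s + 1 / 2 + n‖ ^ 2) * Y ^ 2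
      ≤ (‖s‖ * E * (n * ‖s + n‖) * ‖GammaSeq s n‖ ^ 2) * Y ^ 2 := by
    calc _ = n * (‖GammaSeq s n‖ ^ 2 * (‖s‖ * ‖s + n‖ *
          ∏ j ∈ range n, (‖s + j‖ * ‖s + (j + 1 : ℕ)‖))) := by rw [← hsq]; ring
      _ ≤ n * (‖GammaSeq s n‖ ^ 2 * (‖s‖ * ‖s + n‖ * (Y ^ 2 * E))) := by
        gcongr
        exact prod_norm_mul_norm_add_one_le hs n
      _ = _ := by ring
  rw [div_pow, ← mul_div_assoc, div_le_iff₀ (by positivity)]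
  calc _ ≤ ‖s‖ * E * (n * ‖s + n‖) * ‖GammaSeq s n‖ ^ 2 := le_of_mul_le_mul_right key (by positivity)
    _ = _ := by field_simp

theorem norm_Gamma_add_half_sq_le {s : ℂ} (hs : 1 / 4 ≤ s.re) :
    ‖Gamma (s + 1 / 2)‖ ^ 2 ≤ ‖s‖ * ‖Gamma s‖ ^ 2 := by
  have hlhs : Tendsto (fun n : ℕ => ‖GammaSeq (s + 1 / 2) n‖ ^ 2 * (‖s + 1 / 2 + n‖ / n) ^ 2)
      atTop (𝓝 (‖Gamma (s + 1 / 2)‖ ^ 2 * 1 ^ 2)) :=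
    ((GammaSeq_tendsto_Gamma _).norm.pow 2).mul ((tendsto_norm_add_natCast_div _).pow 2)
  have hrhs : Tendsto (fun n : ℕ => ‖s‖ * Real.exp (rademacherCorrection s
        - rademacherCorrection (s + n)) * (‖s + n‖ / n) * ‖GammaSeq s n‖ ^ 2)
      atTop (𝓝 (‖s‖ * Real.exp (rademacherCorrection s - 0) * 1 * ‖Gamma s‖ ^ 2)) :=
    ((tendsto_const_nhds.mul (((tendsto_rademacherCorrection_add_natCast s).const_sub _).rexp)).mul
      (tendsto_norm_add_natCast_div s)).mul ((GammaSeq_tendsto_Gamma s).norm.pow 2)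
  have hlim := le_of_tendsto_of_tendsto hlhs hrhs <|
    (eventually_ne_atTop 0).mono fun n hn => norm_GammaSeq_add_half_sq_le hs hn
  rw [one_pow, mul_one, sub_zero, mul_one] at hlim
  calc _ ≤ ‖s‖ * Real.exp (rademacherCorrection s) * ‖Gamma s‖ ^ 2 := hlim
    _ ≤ ‖s‖ * 1 * ‖Gamma s‖ ^ 2 := by
      gcongr
      exact Real.exp_le_one_iff.2 (rademacherCorrection_nonpos hs)
    _ = _ := by rw [mul_one]

theorem gamma_ratio_bounds (z : ℂ) (hz : -1/4 < z.re) :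
    ‖z + 1/2‖ ^ (-(1/2) : ℝ)
        ≤ ‖Complex.Gamma (z + 1/2) / Complex.Gamma (z + 1)‖ ∧
    ‖Complex.Gamma (z + 1/2) / Complex.Gamma (z + 1)‖
        ≤ ‖z + 1‖ ^ ((1/2) : ℝ) / ‖z + 1/2‖ := by
  have hre : 0 < (z + 1 / 2).re := by simp; linarith
  have hG : 0 < ‖Gamma (z + 1 / 2)‖ := norm_pos_iff.2 (Gamma_ne_zero_of_re_pos hre)
  have hH : 0 < ‖Gamma (z + 1)‖ := norm_pos_iff.2 (Gamma_ne_zero_of_re_pos (by simp; linarith))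
  have ha : 0 < ‖z + 1 / 2‖ := norm_pos_iff.2 (ne_zero_of_re_pos hre)
  have lower := norm_Gamma_add_half_sq_le (s := z + 1 / 2) (by simp; linarith)
  rw [add_assoc, add_halves] at lower
  have upper := norm_Gamma_add_half_sq_le (s := z + 1) (by simp; linarith)
  rw [add_right_comm, Gamma_add_one _ (ne_zero_of_re_pos hre), norm_mul, mul_pow] at upper
  rw [norm_div, Real.rpow_neg ha.le, ← Real.sqrt_eq_rpow, ← Real.sqrt_eq_rpow]
  constructor
  · rw [inv_le_comm₀ (by positivity) (by positivity), inv_div, div_le_iff₀ hG,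
      ← Real.sqrt_sq hG.le, ← Real.sqrt_mul ha.le]
    exact Real.le_sqrt_of_sq_le lower
  · rw [div_le_div_iff₀ hH ha, ← Real.sqrt_sq hH.le, ← Real.sqrt_mul (norm_nonneg _)]
    exact Real.le_sqrt_of_sq_le (by linarith)
end

section
/- Let W(z) = 9√π · (Γ(z + 1/2)/Γ(z + 1)) · (z - 1)/(z(2z - 1)(2z - 3)). Then there exist constants c, C > 0 such that c|z|^{-5/2} ≤ |W(z)| ≤ C|z|^{-5/2} for all complex z with Re z > 7/4. -/
open Complex Real

/-- The Laplace transform `W` of the weight `w`, in closed form. -/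
noncomputable def W (z : ℂ) : ℂ :=
  9 * Real.sqrt π * (Complex.Gamma (z + 1/2) / Complex.Gamma (z + 1))
    * ((z - 1) / (z * (2*z - 1) * (2*z - 3)))

/-!
Gauss's product `GammaSeq` exhibits `‖Γ(s) / Γ(s + 1/2)‖⁴ ‖s‖²` as the infinite product of
`eulerFactor (s + j) = ‖s + j + 1/2‖⁴ / (‖s + j‖² ‖s + j + 1‖²)`: taking fourth powers turns
the leftover ratios `‖s + j + 1‖² / ‖s + j‖²` into a telescoping product, which cancels the
power `n⁻²` of the Gauss product. The identity
`‖w - 1/2‖² ‖w + 1/2‖² = (‖w‖² + 1/4)² - (re w)²` puts each factor within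
`exp (± 2 / ‖s + j + 1/2‖²)`, and `∑ 1 / (j + 1)² ≤ 2` then bounds the product between `e⁻⁴`
and `e⁴` for `re s ≥ 1/2`. So `‖Γ(z + 1/2) / Γ(z + 1)‖` is comparable to `‖z‖^(-1/2)`, while
the rational factor of `W` is comparable to `‖z‖⁻²` once `‖z‖ ≥ 7/4` keeps `z` away from its
poles and its zero.
-/

open Filter Finset Topology

namespace Complex

theorem GammaSeq_div_GammaSeq_add (s a : ℂ) {n : ℕ} (hn : n ≠ 0) :
    GammaSeq s n / GammaSeq (s + a) n
      = (n : ℂ) ^ (-a) * ∏ j ∈ range (n + 1), (s + a + j) / (s + j) := by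
  have hn' : (n : ℂ) ≠ 0 := Nat.cast_ne_zero.2 hn
  have hpow : (n : ℂ) ^ s ≠ 0 := by simp [cpow_eq_zero_iff, hn']
  have hfac : ((Nat.factorial n : ℕ) : ℂ) ≠ 0 := Nat.cast_ne_zero.2 n.factorial_ne_zero
  rw [GammaSeq, GammaSeq, cpow_add _ _ hn', cpow_neg, prod_div_distrib]
  field_simp

lemma norm_sub_half_sq_mul_norm_add_half_sq (w : ℂ) :
    ‖w - 1/2‖ ^ 2 * ‖w + 1/2‖ ^ 2 = (‖w‖ ^ 2 + 1/4) ^ 2 - w.re ^ 2 := by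
  simp only [Complex.sq_norm, normSq_apply, sub_re, add_re, sub_im, add_im, div_re, div_im,
    one_re, one_im]
  norm_num
  ring

lemma norm_le_norm_add_half_of_re_nonneg {z : ℂ} (hz : 0 ≤ z.re) : ‖z‖ ≤ ‖z + 1/2‖ := by
  rw [← sq_le_sq₀ (norm_nonneg _) (norm_nonneg _), Complex.sq_norm, Complex.sq_norm]
  simp only [normSq_apply, add_re, add_im, div_re, div_im, one_re, one_im]
  norm_num
  nlinarith

end Complex

lemma Finset.prod_range_div_of_ne_zero {K : Type*} [Field K] {f : ℕ → K} (hf : ∀ i, f i ≠ 0)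
    (n : ℕ) : ∏ i ∈ range n, f (i + 1) / f i = f n / f 0 := by
  induction n with
  | zero => simp [hf 0]
  | succ n ih => rw [prod_range_succ, ih]; field_simp [hf n]

lemma Finset.prod_mem_Icc_exp {ι : Type*} (s : Finset ι) {f t : ι → ℝ}
    (h : ∀ i ∈ s, f i ∈ Set.Icc (Real.exp (-t i)) (Real.exp (t i))) :
    ∏ i ∈ s, f i ∈ Set.Icc (Real.exp (-∑ i ∈ s, t i)) (Real.exp (∑ i ∈ s, t i)) := by
  rw [← sum_neg_distrib, Real.exp_sum, Real.exp_sum]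
  exact ⟨prod_le_prod (fun i _ => (Real.exp_pos _).le) fun i hi => (h i hi).1,
    prod_le_prod (fun i hi => (Real.exp_pos _).le.trans (h i hi).1) fun i hi => (h i hi).2⟩

lemma Real.exp_neg_le_inv_one_add {t : ℝ} (ht : -1 < t) : Real.exp (-t) ≤ (1 + t)⁻¹ := by
  rw [Real.exp_neg]
  exact inv_anti₀ (by linarith) (by linarith [Real.add_one_le_exp t])

lemma Real.exp_four_le_64 : Real.exp 4 ≤ 64 := by
  have h : Real.exp 4 = Real.exp 1 ^ 4 := by rw [← Real.exp_nat_mul]; norm_num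
  rw [h]
  calc Real.exp 1 ^ 4 ≤ 2.7182818286 ^ 4 := by gcongr; exact Real.exp_one_lt_d9.le
    _ ≤ 64 := by norm_num

lemma Real.rpow_neg_half_pow_four {r : ℝ} (hr : 0 ≤ r) : (r ^ (-(1/2) : ℝ)) ^ 4 = (r ^ 2)⁻¹ := by
  rw [← Real.rpow_natCast, ← Real.rpow_mul hr, ← Real.rpow_two, ← Real.rpow_neg hr]
  norm_num

lemma sum_range_inv_succ_sq_le_two (n : ℕ) : ∑ j ∈ range n, (((j : ℝ) + 1) ^ 2)⁻¹ ≤ 2 := by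
  have h := sum_Ioo_inv_sq_le (α := ℝ) 0 (n + 1)
  rw [← Finset.Ico_add_one_left_eq_Ioo, ← sum_Ico_add' (fun i : ℕ => ((i : ℝ) ^ 2)⁻¹),
    ← range_eq_Ico] at h
  simpa using h

lemma tendsto_natCast_sq_div_norm_add_sq (c : ℂ) :
    Tendsto (fun n : ℕ => (n : ℝ) ^ 2 / ‖c + n‖ ^ 2) atTop (𝓝 1) := by
  have h : Tendsto (fun n : ℕ => (‖c / n + 1‖ ^ 2)⁻¹) atTop (𝓝 (‖(0 : ℂ) + 1‖ ^ 2)⁻¹) :=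
    (((tendsto_const_div_atTop_nhds_zero_nat c).add_const 1).norm.pow 2).inv₀ (by simp)
  rw [zero_add, norm_one, one_pow, inv_one] at h
  refine h.congr' ?_
  filter_upwards [eventually_ne_atTop 0] with n hn
  have hn' : (n : ℂ) ≠ 0 := Nat.cast_ne_zero.2 hn
  rw [div_add_one hn', norm_div, div_pow, inv_div, Complex.norm_natCast]

noncomputable def eulerFactor (s : ℂ) : ℝ := ‖s + 1/2‖ ^ 4 / (‖s‖ ^ 2 * ‖s + 1‖ ^ 2)

lemma eulerFactor_mem_Icc {s : ℂ} (hs : 1 ≤ ‖s + 1/2‖) :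
    eulerFactor s ∈ Set.Icc (Real.exp (-(2 / ‖s + 1/2‖ ^ 2))) (Real.exp (2 / ‖s + 1/2‖ ^ 2)) := by
  obtain ⟨w, rfl⟩ : ∃ w, s = w - 1/2 := ⟨s + 1/2, by ring⟩
  rw [sub_add_cancel] at hs ⊢
  set V := ‖w‖ ^ 2
  have hV : 1 ≤ V := one_le_pow₀ hs
  have hre : w.re ^ 2 ≤ V := by
    rw [← sq_abs]; exact pow_le_pow_left₀ (abs_nonneg _) (abs_re_le_norm w) 2
  have hP : eulerFactor (w - 1/2) = V ^ 2 / ((V + 1/4) ^ 2 - w.re ^ 2) := by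
    rw [eulerFactor, sub_add_cancel, ← norm_sub_half_sq_mul_norm_add_half_sq, ← pow_mul]
    ring_nf
  have hP₀ : 0 < (V + 1/4) ^ 2 - w.re ^ 2 := by nlinarith
  rw [hP]
  constructor
  · calc Real.exp (-(2 / V)) ≤ (1 + 2 / V)⁻¹ :=
          Real.exp_neg_le_inv_one_add (neg_one_lt_zero.trans_le (by positivity))
      _ = V / (V + 2) := by field_simp
      _ ≤ V ^ 2 / ((V + 1/4) ^ 2 - w.re ^ 2) := by
        rw [div_le_div_iff₀ (by positivity) hP₀]; nlinarith
  · calc V ^ 2 / ((V + 1/4) ^ 2 - w.re ^ 2) ≤ (V + 2) / V := by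
          rw [div_le_div_iff₀ hP₀ (by positivity)]; nlinarith
      _ = 1 + 2 / V := by field_simp
      _ ≤ Real.exp (2 / V) := by linarith [Real.add_one_le_exp (2 / V)]

lemma prod_eulerFactor_mem_Icc {s : ℂ} (hs : 1/2 ≤ s.re) (n : ℕ) :
    ∏ j ∈ range n, eulerFactor (s + j) ∈ Set.Icc (Real.exp (-4)) (Real.exp 4) := by
  have hnorm : ∀ j : ℕ, (j : ℝ) + 1 ≤ ‖s + j + 1/2‖ := fun j =>
    le_trans (by simp; linarith) (re_le_norm _)
  have hsum : ∑ j ∈ range n, 2 / ‖s + j + 1/2‖ ^ 2 ≤ 4 := by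
    calc ∑ j ∈ range n, 2 / ‖s + j + 1/2‖ ^ 2
        ≤ ∑ j ∈ range n, 2 * (((j : ℝ) + 1) ^ 2)⁻¹ := by
          gcongr with j; rw [← div_eq_mul_inv]; gcongr; exact hnorm j
      _ ≤ 4 := by rw [← mul_sum]; linarith [sum_range_inv_succ_sq_le_two n]
  obtain ⟨hlow, hupp⟩ := prod_mem_Icc_exp (range n)
    fun j _ => eulerFactor_mem_Icc (s := s + j) (le_trans (by simp) (hnorm j))
  exact ⟨(Real.exp_le_exp.2 (by linarith)).trans hlow, hupp.trans (Real.exp_le_exp.2 hsum)⟩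

lemma norm_add_half_div_pow_four {s : ℂ} (hs : 0 < s.re) :
    ‖(s + 1/2) / s‖ ^ 4 = eulerFactor s * (‖s + 1‖ ^ 2 / ‖s‖ ^ 2) := by
  have h₀ : ‖s‖ ≠ 0 := norm_ne_zero_iff.2 fun h => by simp [h] at hs
  have h₁ : ‖s + 1‖ ≠ 0 := norm_ne_zero_iff.2 fun h => by
    have := congrArg re h; simp at this; linarith
  rw [eulerFactor, norm_div]
  field_simp

lemma norm_GammaSeq_div_pow_four_mul {s : ℂ} (hs : 0 < s.re) {n : ℕ} (hn : n ≠ 0) :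
    ‖GammaSeq s n / GammaSeq (s + 1/2) n‖ ^ 4 * ‖s‖ ^ 2
      = (∏ j ∈ range (n + 1), eulerFactor (s + j)) * (‖s + n + 1‖ ^ 2 / n ^ 2) := by
  have hre : ∀ j : ℕ, 0 < (s + j).re := fun j => by simp; positivity
  have hnorm : ∀ j : ℕ, ‖s + j‖ ^ 2 ≠ 0 := fun j =>
    pow_ne_zero _ (norm_ne_zero_iff.2 fun h => by simpa [h] using hre j)
  have htel := prod_range_div_of_ne_zero hnorm (n + 1)
  simp only [Nat.cast_add, Nat.cast_one, ← add_assoc, Nat.cast_zero, add_zero] at htel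
  have hs₀ : ‖s‖ ≠ 0 := by simpa using hnorm 0
  have hn₀ : (0 : ℝ) < n := Nat.cast_pos.2 (Nat.pos_of_ne_zero hn)
  have hnpow : ‖(n : ℂ) ^ (-(1/2) : ℂ)‖ ^ 4 = (n ^ 2 : ℝ)⁻¹ := by
    rw [norm_natCast_cpow_of_pos (Nat.pos_of_ne_zero hn), ← Real.rpow_natCast,
      ← Real.rpow_mul hn₀.le]
    norm_num
  rw [GammaSeq_div_GammaSeq_add s _ hn, norm_mul, mul_pow, hnpow, norm_prod, ← prod_pow]
  simp_rw [add_right_comm s (1/2 : ℂ), norm_add_half_div_pow_four (hre _), prod_mul_distrib]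
  rw [htel]
  field_simp

lemma tendsto_prod_eulerFactor {s : ℂ} (hs : 0 < s.re) :
    Tendsto (fun n : ℕ => ∏ j ∈ range n, eulerFactor (s + j)) atTop
      (𝓝 (‖Gamma s / Gamma (s + 1/2)‖ ^ 4 * ‖s‖ ^ 2)) := by
  have hΓ : Gamma (s + 1/2) ≠ 0 := Gamma_ne_zero_of_re_pos (by simp; linarith)
  have hGammaSeq := ((GammaSeq_tendsto_Gamma s).div (GammaSeq_tendsto_Gamma _) hΓ).norm.pow 4
  have hlim := (hGammaSeq.mul_const (‖s‖ ^ 2)).mul (tendsto_natCast_sq_div_norm_add_sq (s + 1))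
  rw [mul_one] at hlim
  rw [← tendsto_add_atTop_iff_nat 1]
  refine hlim.congr' ?_
  filter_upwards [eventually_ne_atTop 0] with n hn
  have hn₀ : (n : ℝ) ≠ 0 := Nat.cast_ne_zero.2 hn
  have hnorm : ‖s + n + 1‖ ≠ 0 := norm_ne_zero_iff.2 fun h => by
    have := congrArg re h; simp at this; linarith [(Nat.cast_nonneg n : (0 : ℝ) ≤ n)]
  rw [Pi.div_apply, norm_GammaSeq_div_pow_four_mul hs hn, add_right_comm s 1]
  field_simp

theorem norm_Gamma_div_Gamma_add_half_pow_four_mul_mem_Icc {s : ℂ} (hs : 1/2 ≤ s.re) :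
    ‖Gamma s / Gamma (s + 1/2)‖ ^ 4 * ‖s‖ ^ 2 ∈ Set.Icc (Real.exp (-4)) (Real.exp 4) :=
  have hlim := tendsto_prod_eulerFactor (s := s) (by linarith)
  ⟨ge_of_tendsto' hlim fun n => (prod_eulerFactor_mem_Icc hs n).1,
    le_of_tendsto' hlim fun n => (prod_eulerFactor_mem_Icc hs n).2⟩

lemma norm_Gamma_add_half_div_Gamma_add_one_mem_Icc {z : ℂ} (hre : 0 ≤ z.re) (hz : 1/2 ≤ ‖z‖) :
    ‖Gamma (z + 1/2) / Gamma (z + 1)‖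
      ∈ Set.Icc (1/4 * ‖z‖ ^ (-(1/2) : ℝ)) (3 * ‖z‖ ^ (-(1/2) : ℝ)) := by
  obtain ⟨hlow, hupp⟩ :=
    norm_Gamma_div_Gamma_add_half_pow_four_mul_mem_Icc (s := z + 1/2) (by simp; linarith)
  rw [show z + 1/2 + 1/2 = z + 1 by ring] at hlow hupp
  set G := ‖Gamma (z + 1/2) / Gamma (z + 1)‖
  set r := ‖z‖
  have hr : 0 < r := by linarith
  have hs₁ : r ≤ ‖z + 1/2‖ := norm_le_norm_add_half_of_re_nonneg hre
  have hs₂ : ‖z + 1/2‖ ≤ 2 * r := by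
    calc ‖z + 1/2‖ ≤ r + ‖(1/2 : ℂ)‖ := norm_add_le _ _
      _ ≤ 2 * r := by norm_num; linarith
  have hs₀ : 0 < ‖z + 1/2‖ ^ 2 := pow_pos (hr.trans_le hs₁) 2
  constructor
  · rw [← pow_le_pow_iff_left₀ (by positivity) (norm_nonneg _) four_ne_zero, mul_pow,
      Real.rpow_neg_half_pow_four hr.le]
    have h64 : (64 : ℝ)⁻¹ ≤ Real.exp (-4) := by
      rw [Real.exp_neg]; exact inv_anti₀ (Real.exp_pos 4) Real.exp_four_le_64
    calc (1/4) ^ 4 * (r ^ 2)⁻¹ = 64⁻¹ / (2 * r) ^ 2 := by field_simp; norm_num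
      _ ≤ Real.exp (-4) / (2 * r) ^ 2 := by gcongr
      _ ≤ Real.exp (-4) / ‖z + 1/2‖ ^ 2 := by gcongr
      _ ≤ G ^ 4 := by rwa [div_le_iff₀ hs₀]
  · rw [← pow_le_pow_iff_left₀ (norm_nonneg _) (by positivity) four_ne_zero, mul_pow,
      Real.rpow_neg_half_pow_four hr.le]
    calc G ^ 4 ≤ Real.exp 4 / ‖z + 1/2‖ ^ 2 := by rwa [le_div_iff₀ hs₀]
      _ ≤ 64 / r ^ 2 := by gcongr; exact Real.exp_four_le_64
      _ ≤ 3 ^ 4 * (r ^ 2)⁻¹ := by rw [← div_eq_mul_inv]; gcongr; norm_num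

lemma norm_W_rational_factor_mem_Icc {z : ℂ} (hz : 7/4 ≤ ‖z‖) :
    ‖(z - 1) / (z * (2*z - 1) * (2*z - 3))‖ ∈ Set.Icc (1/28 * (‖z‖ ^ 2)⁻¹) (5 * (‖z‖ ^ 2)⁻¹) := by
  set r := ‖z‖
  have h2z : ‖2 * z‖ = 2 * r := by rw [norm_mul, Complex.norm_two]
  have hA₁ : r - 1 ≤ ‖z - 1‖ := by simpa using norm_sub_norm_le z 1
  have hA₂ : ‖z - 1‖ ≤ r + 1 := by simpa using norm_sub_le z 1
  have hB₁ : 2 * r - 1 ≤ ‖2 * z - 1‖ := by simpa [h2z] using norm_sub_norm_le (2 * z) 1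
  have hB₂ : ‖2 * z - 1‖ ≤ 2 * r + 1 := by simpa [h2z] using norm_sub_le (2 * z) 1
  have hC₁ : 2 * r - 3 ≤ ‖2 * z - 3‖ := by simpa [h2z] using norm_sub_norm_le (2 * z) 3
  have hC₂ : ‖2 * z - 3‖ ≤ 2 * r + 3 := by simpa [h2z] using norm_sub_le (2 * z) 3
  have hden : 0 < r * (2 * r - 1) * (2 * r - 3) :=
    mul_pos (mul_pos (by linarith) (by linarith)) (by linarith)
  rw [norm_div, norm_mul, norm_mul]
  constructor
  · calc 1/28 * (r ^ 2)⁻¹ ≤ (r - 1) / (r * (2 * r + 1) * (2 * r + 3)) := by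
          rw [← div_eq_mul_inv, div_le_div_iff₀ (by positivity) (by positivity)]; nlinarith
      _ ≤ ‖z - 1‖ / (r * ‖2 * z - 1‖ * ‖2 * z - 3‖) := by
          gcongr
          exact hden.trans_le (by gcongr; linarith)
  · calc ‖z - 1‖ / (r * ‖2 * z - 1‖ * ‖2 * z - 3‖)
        ≤ (r + 1) / (r * (2 * r - 1) * (2 * r - 3)) := by
          gcongr; linarith
      _ ≤ 5 * (r ^ 2)⁻¹ := by
          rw [← div_eq_mul_inv, div_le_div_iff₀ hden (by positivity)]
          nlinarith [mul_nonneg (by linarith : (0 : ℝ) ≤ r - 7/4) (by linarith : (0 : ℝ) ≤ r)]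

lemma norm_W (z : ℂ) :
    ‖W z‖ = 9 * Real.sqrt π * ‖Gamma (z + 1/2) / Gamma (z + 1)‖
      * ‖(z - 1) / (z * (2*z - 1) * (2*z - 3))‖ := by
  rw [W, norm_mul, norm_mul, norm_mul, Complex.norm_real, Real.norm_of_nonneg (Real.sqrt_nonneg _)]
  norm_num

theorem W_size : ∃ c C : ℝ, 0 < c ∧ 0 < C ∧ ∀ z : ℂ, 7/4 < z.re →
    c * ‖z‖ ^ (-(5/2) : ℝ) ≤ ‖W z‖ ∧
    ‖W z‖ ≤ C * ‖z‖ ^ (-(5/2) : ℝ) := by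
  refine ⟨9 * Real.sqrt π * (1/4) * (1/28), 9 * Real.sqrt π * 3 * 5, by positivity, by positivity,
    fun z hz => ?_⟩
  have hr : 7/4 ≤ ‖z‖ := hz.le.trans (re_le_norm z)
  obtain ⟨hG₁, hG₂⟩ := norm_Gamma_add_half_div_Gamma_add_one_mem_Icc (by linarith) (by linarith)
  obtain ⟨hR₁, hR₂⟩ := norm_W_rational_factor_mem_Icc hr
  have hsplit : ‖z‖ ^ (-(5/2) : ℝ) = ‖z‖ ^ (-(1/2) : ℝ) * (‖z‖ ^ 2)⁻¹ := by
    rw [← Real.rpow_two, ← Real.rpow_neg (norm_nonneg z), ← Real.rpow_add (by linarith)]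
    norm_num
  rw [norm_W, hsplit]
  constructor
  · calc _ = 9 * Real.sqrt π * (1/4 * ‖z‖ ^ (-(1/2) : ℝ)) * (1/28 * (‖z‖ ^ 2)⁻¹) := by ring
      _ ≤ _ := by gcongr
  · calc _ ≤ 9 * Real.sqrt π * (3 * ‖z‖ ^ (-(1/2) : ℝ)) * (5 * (‖z‖ ^ 2)⁻¹) := by gcongr
      _ = _ := by ring
end

section
/- For all z ∈ ℂ with Re z > 3/2, one has ∫₀^∞ e^{-kz}·arctan((e^k - 1)^{1/2}) dk = (1/(2z))·Γ(z + 1/2)Γ(1/2)/Γ(z + 1). -/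
/-!
Since `A k = arctan √(e^k - 1)` vanishes at `0` and is bounded, integration by parts gives
`∫ e^{-kz} A = z⁻¹ ∫ e^{-kz} A'` with `A' k = (e^k - 1)^{-1/2} / 2`.
The substitution `x = e^{-k}` turns `∫ e^{-kz} (e^k - 1)^{b-1} dk` into the Beta integral
`B(z - b + 1, b)`, and `B(z + 1/2, 1/2) = Γ(z + 1/2) Γ(1/2) / Γ(z + 1)`.
-/

open Real Complex MeasureTheory Set Filter Topology

theorem integral_cexp_mul_deriv_eq_sub {f f' : ℝ → ℂ} {z : ℂ} {C : ℝ} (hz : 0 < z.re)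
    (hf₀ : ContinuousWithinAt f (Ici 0) 0) (hf : ∀ k ∈ Ioi (0 : ℝ), HasDerivAt f (f' k) k)
    (hf_bdd : ∀ k ∈ Ioi (0 : ℝ), ‖f k‖ ≤ C)
    (hf' : IntegrableOn (fun k : ℝ => cexp (-k * z) * f' k) (Ioi 0)) :
    ∫ k in Ioi (0 : ℝ), cexp (-k * z) * f' k
      = z * (∫ k in Ioi (0 : ℝ), cexp (-k * z) * f k) - f 0 := by
  have hexp : ∀ k ∈ Ioi (0 : ℝ),
      HasDerivAt (fun t : ℝ => cexp (-t * z)) (-z * cexp (-k * z)) k := fun k _ => by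
    simpa [mul_comm] using ((hasDerivAt_id (k : ℂ)).neg.mul_const z).cexp.comp_ofReal
  have hnorm : ∀ k : ℝ, ‖cexp (-k * z)‖ = Real.exp (-(z.re * k)) := fun k => by
    simp [Complex.norm_exp, mul_comm]
  have hexp_int : IntegrableOn (fun k : ℝ => cexp (-k * z)) (Ioi 0) := by
    simpa [mul_comm] using integrableOn_exp_mul_complex_Ioi (a := -z) (by simpa using hz) 0
  have hf_int : IntegrableOn (fun k : ℝ => cexp (-k * z) * f k) (Ioi 0) :=
    hexp_int.mul_bdd
      (ContinuousOn.aestronglyMeasurable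
        (fun k hk => (hf k hk).continuousAt.continuousWithinAt) measurableSet_Ioi)
      (ae_restrict_of_forall_mem measurableSet_Ioi hf_bdd)
  have h_zero : Tendsto (fun k : ℝ => cexp (-k * z) * f k) (𝓝[>] 0) (𝓝 (f 0)) := by
    have : ContinuousWithinAt (fun k : ℝ => cexp (-k * z) * f k) (Ioi 0) 0 :=
      (Continuous.continuousWithinAt (by fun_prop)).mul (hf₀.mono Ioi_subset_Ici_self)
    simpa using this.tendsto
  have h_infty : Tendsto (fun k : ℝ => cexp (-k * z) * f k) atTop (𝓝 0) := by
    have h_decay : Tendsto (fun k : ℝ => Real.exp (-(z.re * k)) * C) atTop (𝓝 0) := by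
      simpa using (Real.tendsto_exp_neg_atTop_nhds_zero.comp
        (tendsto_id.const_mul_atTop hz)).mul_const C
    refine squeeze_zero_norm' ?_ h_decay
    filter_upwards [Ioi_mem_atTop 0] with k hk
    rw [norm_mul, hnorm]
    exact mul_le_mul_of_nonneg_left (hf_bdd k hk) (Real.exp_pos _).le
  have hu'v : IntegrableOn (fun k : ℝ => -z * cexp (-k * z) * f k) (Ioi 0) := by
    simp only [mul_assoc]
    exact hf_int.const_mul (-z)
  rw [integral_Ioi_mul_deriv_eq_deriv_mul hexp hf hf' hu'v h_zero h_infty]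
  simp only [neg_mul, mul_assoc, integral_neg, integral_const_mul]
  ring

theorem image_neg_log_Ioo_zero_one : (fun x : ℝ => -Real.log x) '' Ioo 0 1 = Ioi 0 := by
  rw [show (fun x : ℝ => -Real.log x) = Neg.neg ∘ Real.log from rfl, image_comp,
    Real.image_log_Ioo_zero one_pos, Real.log_one, image_neg_Iio, neg_zero]

theorem injOn_neg_log_Ioo_zero_one : InjOn (fun x : ℝ => -Real.log x) (Ioo 0 1) :=
  fun _ hx _ hy h => Real.log_injOn_pos hx.1 hy.1 (neg_injective h)

section NegLogSubstitution

variable {E : Type*} [NormedAddCommGroup E] [NormedSpace ℝ E] {g : ℝ → E}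

theorem abs_neg_inv_smul_eqOn_Ioo_zero_one :
    EqOn (fun x : ℝ => |-x⁻¹| • g (-Real.log x)) (fun x => x⁻¹ • g (-Real.log x))
      (Ioo 0 1) :=
  fun x hx => by simp only [abs_neg, abs_of_pos (inv_pos.2 hx.1)]

theorem integrableOn_Ioi_zero_iff_comp_neg_log :
    IntegrableOn g (Ioi 0) ↔
      IntegrableOn (fun x : ℝ => x⁻¹ • g (-Real.log x)) (Ioo 0 1) := by
  rw [← image_neg_log_Ioo_zero_one,
    integrableOn_image_iff_integrableOn_abs_deriv_smul (f := fun x => -Real.log x)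
      measurableSet_Ioo (fun x hx => (Real.hasDerivAt_log hx.1.ne').neg.hasDerivWithinAt)
      injOn_neg_log_Ioo_zero_one,
    integrableOn_congr_fun abs_neg_inv_smul_eqOn_Ioo_zero_one measurableSet_Ioo]

theorem integral_Ioi_zero_eq_integral_comp_neg_log :
    ∫ k in Ioi 0, g k = ∫ x in Ioo 0 1, x⁻¹ • g (-Real.log x) := by
  rw [← image_neg_log_Ioo_zero_one,
    integral_image_eq_integral_abs_deriv_smul (f := fun x => -Real.log x)
      measurableSet_Ioo (fun x hx => (Real.hasDerivAt_log hx.1.ne').neg.hasDerivWithinAt)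
      injOn_neg_log_Ioo_zero_one,
    setIntegral_congr_fun measurableSet_Ioo abs_neg_inv_smul_eqOn_Ioo_zero_one]

end NegLogSubstitution

theorem inv_smul_cexp_mul_rpow_exp_sub_one_neg_log {x : ℝ} (hx : x ∈ Ioo (0 : ℝ) 1)
    (z : ℂ) (b : ℝ) :
    x⁻¹ • (cexp (-(-Real.log x : ℝ) * z) * ((Real.exp (-Real.log x) - 1) ^ (b - 1) : ℝ))
      = (x : ℂ) ^ (z - b + 1 - 1) * (1 - (x : ℂ)) ^ ((b : ℂ) - 1) := by
  obtain ⟨hx0, hx1⟩ := hx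
  have hx0' : (x : ℂ) ≠ 0 := by exact_mod_cast hx0.ne'
  have hsplit : (Real.exp (-Real.log x) - 1) ^ (b - 1)
      = (1 - x) ^ (b - 1) * (x ^ (b - 1))⁻¹ := by
    rw [Real.exp_neg, Real.exp_log hx0, show x⁻¹ - 1 = (1 - x) * x⁻¹ by field_simp,
      Real.mul_rpow (by linarith) (by positivity), Real.inv_rpow hx0.le]
  have hcexp : cexp (-(-Real.log x : ℝ) * z) = (x : ℂ) ^ z := by
    rw [Complex.cpow_def_of_ne_zero hx0', ← Complex.ofReal_log hx0.le]
    push_cast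
    ring_nf
  rw [hsplit, hcexp, Complex.real_smul]
  push_cast [Complex.ofReal_cpow (by linarith : (0 : ℝ) ≤ 1 - x), Complex.ofReal_cpow hx0.le]
  rw [show z - b + 1 - 1 = z - b by ring]
  simp only [Complex.cpow_sub _ _ hx0', Complex.cpow_one]
  field_simp

theorem integrableOn_cexp_mul_rpow_exp_sub_one {z : ℂ} {b : ℝ} (hb : 0 < b)
    (hz : b - 1 < z.re) :
    IntegrableOn (fun k : ℝ => cexp (-k * z) * ((Real.exp k - 1) ^ (b - 1) : ℝ)) (Ioi 0) := by
  have hu : 0 < (z - b + 1).re := by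
    simp only [Complex.add_re, Complex.sub_re, Complex.ofReal_re, Complex.one_re]
    linarith
  rw [integrableOn_Ioi_zero_iff_comp_neg_log]
  exact ((Complex.betaIntegral_convergent hu (by simpa using hb)).1.mono_set
    Ioo_subset_Ioc_self).congr_fun
    (fun x hx => (inv_smul_cexp_mul_rpow_exp_sub_one_neg_log hx z b).symm) measurableSet_Ioo

theorem integral_cexp_mul_rpow_exp_sub_one (z : ℂ) (b : ℝ) :
    ∫ k in Ioi (0 : ℝ), cexp (-k * z) * ((Real.exp k - 1) ^ (b - 1) : ℝ)
      = betaIntegral (z - b + 1) b := by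
  rw [integral_Ioi_zero_eq_integral_comp_neg_log,
    setIntegral_congr_fun measurableSet_Ioo
      (fun x hx => inv_smul_cexp_mul_rpow_exp_sub_one_neg_log hx z b),
    Complex.betaIntegral, intervalIntegral.integral_of_le zero_le_one,
    integral_Ioc_eq_integral_Ioo]

theorem hasDerivAt_arctan_rpow_exp_sub_one {k : ℝ} (hk : 0 < k) :
    HasDerivAt (fun t => Real.arctan ((Real.exp t - 1) ^ (1 / 2 : ℝ)))
      ((Real.exp k - 1) ^ ((1 / 2 : ℝ) - 1) / 2) k := by
  have hk' : 0 < Real.exp k - 1 := by linarith [Real.add_one_lt_exp hk.ne']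
  have hsq : ((Real.exp k - 1) ^ (1 / 2 : ℝ)) ^ 2 = Real.exp k - 1 := by
    rw [← Real.sqrt_eq_rpow, Real.sq_sqrt hk'.le]
  refine ((Real.hasDerivAt_arctan _).comp k ((Real.hasDerivAt_rpow_const (Or.inl hk'.ne')).comp k
    ((Real.hasDerivAt_exp k).sub_const 1))).congr_deriv ?_
  rw [Function.comp_apply, hsq]
  field_simp
  ring

theorem integral_cexp_mul_arctan_rpow_exp_sub_one {z : ℂ} (hz : 0 < z.re) :
    ∫ k in Ioi (0 : ℝ), cexp (-k * z) * (Real.arctan ((Real.exp k - 1) ^ (1 / 2 : ℝ)) : ℂ)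
      = betaIntegral (z + 1 / 2) (1 / 2) / 2 / z := by
  set A : ℝ → ℂ := fun k => (Real.arctan ((Real.exp k - 1) ^ (1 / 2 : ℝ)) : ℂ) with hA
  set A' : ℝ → ℂ := fun k => ((Real.exp k - 1) ^ ((1 / 2 : ℝ) - 1) / 2 : ℝ) with hA'
  have hA_cont : ContinuousWithinAt A (Ici 0) 0 := by
    have := Real.continuous_rpow_const (q := 1 / 2) (by norm_num)
    exact Continuous.continuousWithinAt (by fun_prop)
  have hA_bdd : ∀ k ∈ Ioi (0 : ℝ), ‖A k‖ ≤ π / 2 := fun k _ => by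
    rw [hA, Complex.norm_real, Real.norm_eq_abs]
    exact (abs_lt.2 (arctan_mem_Ioo _)).le
  have hA₀ : A 0 = 0 := by
    simp only [hA, Real.exp_zero, sub_self, Real.zero_rpow (by norm_num : (1 / 2 : ℝ) ≠ 0),
      Real.arctan_zero, Complex.ofReal_zero]
  have hA'_int : IntegrableOn (fun k : ℝ => cexp (-k * z) * A' k) (Ioi 0) := by
    simp only [hA', Complex.ofReal_div, Complex.ofReal_ofNat, mul_div_assoc']
    exact (integrableOn_cexp_mul_rpow_exp_sub_one (by norm_num) (by linarith)).div_const 2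
  have hA'_laplace :
      ∫ k in Ioi (0 : ℝ), cexp (-k * z) * A' k = betaIntegral (z + 1 / 2) (1 / 2) / 2 := by
    simp only [hA', Complex.ofReal_div, Complex.ofReal_ofNat, mul_div_assoc']
    rw [integral_div, integral_cexp_mul_rpow_exp_sub_one]
    congr 2 <;> push_cast <;> ring
  have hibp := integral_cexp_mul_deriv_eq_sub hz hA_cont
    (fun k hk => (hasDerivAt_arctan_rpow_exp_sub_one hk).ofReal_comp) hA_bdd hA'_int
  rw [hA'_laplace, hA₀, sub_zero] at hibp
  rw [hibp, mul_div_cancel_left₀ _ (fun h => by simp [h] at hz)]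

theorem laplace_arctan (z : ℂ) (hz : 3/2 < z.re) :
    ∫ k in Ioi (0:ℝ),
        Complex.exp (-k * z) * (Real.arctan ((Real.exp k - 1) ^ (1/2 : ℝ)) : ℝ)
      = (1 / (2 * z)) * Complex.Gamma (z + 1/2) * Complex.Gamma (1/2)
          / Complex.Gamma (z + 1) := by
  have hz₀ : 0 < z.re := by linarith
  rw [integral_cexp_mul_arctan_rpow_exp_sub_one hz₀,
    betaIntegral_eq_Gamma_mul_div _ _ (by norm_num; linarith) (by norm_num),
    show z + 1 / 2 + 1 / 2 = z + 1 by ring]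
  ring
end
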